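/- arXiv:1611.02017 — 6 statements merged into one kernel-verified Lean document; each statement's English description precedes it below -/
import Mathlib

section
/- For every n ≥ 1 and every algebraically closed field k, there exists a family of pairwise non-isomorphic simple n-dimensional modules over the free algebra k⟨X,Y⟩ indexed by a cofinite subset of k: fix a set M of n−1 elements of k, and for λ not in M ∪ {entries of M}, let X act on k^n by the diagonal matrix with diagonal entries λ and the elements of M, and let Y act by the cyclic permutation matrix sending e_1 ↦ e_2 ↦ ⋯ ↦ e_n ↦ e_1. Then each such module S(λ) is simple, and S(λ) ≅ S(μ) implies λ = μ. -/
/-!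
If `D = diag d` has distinct entries, applying `∏_{j ≠ i} (D - d j)` to a vector `u` leaves
`(∏_{j ≠ i} (d i - d j)) u_i e_i`, so a nonzero `D`-invariant subspace contains some `e_i`; the
cyclic shift then moves `e_i` to every `e_j`. An isomorphism `S(λ) ≅ S(μ)` sends the
`λ`-eigenvector `e_0` of `diag(λ, f)` to a `λ`-eigenvector of `diag(μ, f)`, and `λ ∉ range f`.
-/

open Matrix

section DiagonalAndShift

variable {k ι : Type*} [Field k] [Fintype ι] [DecidableEq ι] {d : ι → k}
  {U : Submodule k (ι → k)}

lemma prod_sub_mul_mem_of_diagonal_invariant (hU : ∀ u ∈ U, diagonal d *ᵥ u ∈ U)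
    {u : ι → k} (hu : u ∈ U) (s : Finset ι) :
    (fun l => (∏ j ∈ s, (d l - d j)) * u l) ∈ U := by
  induction s using Finset.induction_on with
  | empty => simpa using hu
  | insert j s hj ih =>
    convert U.sub_mem (hU _ ih) (U.smul_mem (d j) ih) using 1
    ext l
    simp only [Finset.prod_insert hj, mulVec_diagonal, Pi.sub_apply, Pi.smul_apply, smul_eq_mul]
    ring

lemma exists_single_mem_of_diagonal_invariant (hd : Function.Injective d)
    (hU : ∀ u ∈ U, diagonal d *ᵥ u ∈ U) (hU₀ : U ≠ ⊥) : ∃ i, Pi.single i (1 : k) ∈ U := by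
  obtain ⟨u, hu, hu₀⟩ := U.ne_bot_iff.mp hU₀
  obtain ⟨i, hi⟩ := Function.ne_iff.mp hu₀
  set c := ∏ j ∈ Finset.univ.erase i, (d i - d j)
  have hc : c ≠ 0 := Finset.prod_ne_zero_iff.mpr fun j hj =>
    sub_ne_zero.mpr (hd.ne (Finset.ne_of_mem_erase hj).symm)
  have hproj : (fun l => (∏ j ∈ Finset.univ.erase i, (d l - d j)) * u l) =
      (c * u i) • Pi.single i (1 : k) := by
    ext l
    rcases eq_or_ne l i with rfl | hl
    · simp [c]
    · simp [hl, Finset.prod_eq_zero (Finset.mem_erase.mpr ⟨hl, Finset.mem_univ l⟩)]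
  refine ⟨i, ?_⟩
  have hmem := U.smul_mem (c * u i)⁻¹ (hproj ▸ prod_sub_mul_mem_of_diagonal_invariant hU hu _)
  rwa [inv_smul_smul₀ (mul_ne_zero hc hi)] at hmem

lemma single_iterate_mem_of_invariant (σ : ι → ι)
    (hU : ∀ u ∈ U, (of fun i j => if i = σ j then (1 : k) else 0) *ᵥ u ∈ U)
    {i : ι} (hi : Pi.single i (1 : k) ∈ U) (t : ℕ) : Pi.single (σ^[t] i) (1 : k) ∈ U := by
  induction t with
  | zero => exact hi
  | succ t ih =>
    convert hU _ ih using 1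
    ext l
    simp [Function.iterate_succ_apply', Pi.single_apply]

lemma eq_top_of_forall_single_mem (h : ∀ i, Pi.single i (1 : k) ∈ U) : U = ⊤ := by
  rw [eq_top_iff, ← (Pi.basisFun k ι).span_eq, Submodule.span_le]
  rintro _ ⟨i, rfl⟩
  simpa using h i

lemma exists_eq_of_intertwines_diagonal {d' : ι → k} (P : (ι → k) ≃ₗ[k] (ι → k))
    (hP : ∀ v, P (diagonal d *ᵥ v) = diagonal d' *ᵥ P v) (i : ι) : ∃ j, d' j = d i := by
  rw [← hasEigenvalue_toLin'_diagonal_iff]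
  refine Module.End.hasEigenvalue_of_hasEigenvector (x := P (Pi.single i 1))
    ⟨Module.End.mem_eigenspace_iff.mpr ?_, by simp⟩
  rw [toLin'_apply, ← hP, diagonal_mulVec_single, ← map_smul, ← smul_eq_mul, Pi.single_smul']

end DiagonalAndShift

theorem simple_modules_free_algebra_general
    (k : Type) [Field k] (n : ℕ)
    (f : Fin n → k) (hf : Function.Injective f)
    (lam mu : k) (hlam : lam ∉ Set.range f) :
    -- the matrices of the action for a given parameter
    letI x : k → Matrix (Fin (n + 1)) (Fin (n + 1)) k :=
      fun l => Matrix.diagonal (Fin.cons l f)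
    letI y : Matrix (Fin (n + 1)) (Fin (n + 1)) k :=
      Matrix.of fun i j => if i = finRotate (n + 1) j then 1 else 0
    -- simplicity of S(λ)
    (∀ U : Submodule k (Fin (n + 1) → k),
        (∀ u ∈ U, (x lam).mulVec u ∈ U) → (∀ u ∈ U, y.mulVec u ∈ U) →
        U = ⊥ ∨ U = ⊤) ∧
    -- non-isomorphy: an isomorphism S(λ) ≅ S(μ) forces λ = μ
    ((∃ P : (Fin (n + 1) → k) ≃ₗ[k] (Fin (n + 1) → k),
        (∀ v, P ((x lam).mulVec v) = (x mu).mulVec (P v)) ∧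
        (∀ v, P (y.mulVec v) = y.mulVec (P v))) → lam = mu) := by
  refine ⟨fun U hxU hyU => or_iff_not_imp_left.mpr fun hU₀ => ?_, ?_⟩
  · obtain ⟨i, hi⟩ := exists_single_mem_of_diagonal_invariant
      (Fin.cons_injective_of_injective hlam hf) hxU hU₀
    refine eq_top_of_forall_single_mem fun j => ?_
    have hij : (finRotate (n + 1))^[(j - i).val] i = j := by
      rw [← finCycle_eq_finRotate_iterate, finCycle_apply, add_sub_cancel]
    exact hij ▸ single_iterate_mem_of_invariant _ hyU hi _
  · rintro ⟨P, hPx, -⟩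
    obtain ⟨j, hj⟩ := exists_eq_of_intertwines_diagonal P hPx 0
    cases j using Fin.cases with
    | zero => exact hj.symm
    | succ j => exact absurd ⟨j, hj⟩ hlam

/-- Let `k` be an algebraically closed field and `n + 1 ≥ 1` the
dimension.  Fix a set of `n` elements of `k`, given as an injective map `f : Fin n → k`.
For `λ ∉ range f` let `S(λ)` be the `k⟨X,Y⟩`-module structure on `k^{n+1}` where `X` acts
by the diagonal matrix with diagonal entries `λ, f 0, …, f (n−1)` and `Y` acts by the
cyclic permutation matrix sending `e_i ↦ e_{i+1}` (indices mod `n+1`).  Then each `S(λ)`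
is simple (the only subspaces invariant under both actions are `⊥` and `⊤`), and
`S(λ) ≅ S(μ)` implies `λ = μ`. -/
theorem simple_modules_free_algebra
    (k : Type) [Field k] [IsAlgClosed k] (n : ℕ)
    (f : Fin n → k) (hf : Function.Injective f)
    (lam mu : k) (hlam : lam ∉ Set.range f) (hmu : mu ∉ Set.range f) :
    -- the matrices of the action for a given parameter
    letI x : k → Matrix (Fin (n + 1)) (Fin (n + 1)) k :=
      fun l => Matrix.diagonal (Fin.cons l f)
    letI y : Matrix (Fin (n + 1)) (Fin (n + 1)) k :=
      Matrix.of fun i j => if i = finRotate (n + 1) j then 1 else 0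
    -- simplicity of S(λ)
    (∀ U : Submodule k (Fin (n + 1) → k),
        (∀ u ∈ U, (x lam).mulVec u ∈ U) → (∀ u ∈ U, y.mulVec u ∈ U) →
        U = ⊥ ∨ U = ⊤) ∧
    -- non-isomorphy: an isomorphism S(λ) ≅ S(μ) forces λ = μ
    ((∃ P : (Fin (n + 1) → k) ≃ₗ[k] (Fin (n + 1) → k),
        (∀ v, P ((x lam).mulVec v) = (x mu).mulVec (P v)) ∧
        (∀ v, P (y.mulVec v) = y.mulVec (P v))) → lam = mu) :=
  simple_modules_free_algebra_general k n f hf lam mu hlam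
end

section
/- Let k be a field of characteristic 0 and n ≥ 2. There do not exist scalars p_2, …, p_n, q_2, …, q_n ∈ k and a function x : k → k such that for all b ∈ k: X^n + (b p_n + q_n) X^{n−1} + ⋯ + (b p_{i+1} + q_{i+1}) X^i + ⋯ + (b p_2 + q_2) X + b = (X − x(b))^n in k[X]. -/
open Polynomial

/-!
Comparing the coefficients of `X ^ (n - 1)` gives `n * (-x b) = b * p n + q n`, so `-x b` is an
affine function of `b` (here `n` is invertible since the characteristic is `0`). Comparing constant
coefficients gives `(-x b) ^ n = b`. Over an infinite field this makes `(a X + c) ^ n = X` an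
identity of polynomials, impossible by degrees since `n ≠ 1`.
-/

theorem not_forall_affine_pow_eq_self {R : Type*} [CommRing R] [IsDomain R] [Infinite R]
    {n : ℕ} (hn : n ≠ 1) (a c : R) : ¬ ∀ b : R, (a * b + c) ^ n = b := by
  intro h
  have hpoly : (C a * X + C c) ^ n = X := Polynomial.funext fun b => by simpa using h b
  have hdeg := congrArg natDegree hpoly
  rw [natDegree_pow, natDegree_X] at hdeg
  exact hn (Nat.eq_one_of_mul_eq_one_right hdeg)

section Coefficients

variable {R : Type*} [CommRing R]

theorem coeff_X_sub_C_pow_zero (r : R) (n : ℕ) : ((X - C r) ^ n).coeff 0 = (-r) ^ n := by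
  simp [coeff_zero_eq_eval_zero]

theorem coeff_X_sub_C_pow_pred (r : R) {n : ℕ} (hn : n ≠ 0) :
    ((X - C r) ^ n).coeff (n - 1) = n * -r := by
  rw [sub_eq_add_neg, ← C_neg, coeff_X_add_C_pow, Nat.sub_sub_self (by omega), pow_one,
    Nat.choose_symm (by omega), Nat.choose_one_right, mul_comm]

variable (a : ℕ → R) (b : R) {n : ℕ}

theorem coeff_zero_X_pow_add_sum_add_C (hn : n ≠ 0) :
    (X ^ n + ∑ i ∈ Finset.Icc 1 (n - 1), C (a i) * X ^ i + C b : R[X]).coeff 0 = b := by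
  simp [coeff_X_pow, hn.symm]

theorem coeff_pred_X_pow_add_sum_add_C (hn : 2 ≤ n) :
    (X ^ n + ∑ i ∈ Finset.Icc 1 (n - 1), C (a i) * X ^ i + C b : R[X]).coeff (n - 1) =
      a (n - 1) := by
  simp [coeff_X_pow, coeff_C, show n - 1 ≠ n by omega, show 1 ≤ n - 1 by omega,
    show n - 1 ≠ 0 by omega]

end Coefficients

/-- Let `k` be a field of characteristic 0 and `n ≥ 2`.  There are no
scalars `p_2, …, p_n, q_2, …, q_n ∈ k` and no function `x : k → k` such that for all
`b ∈ k` one has the identity of polynomials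
`X^n + (b·p_n + q_n)X^{n−1} + ⋯ + (b·p_{i+1} + q_{i+1})X^i + ⋯ + (b·p_2 + q_2)X + b
  = (X − x(b))^n` in `k[X]`. -/
theorem no_universal_nth_power_factorization
    (k : Type) [Field k] [CharZero k] (n : ℕ) (hn : 2 ≤ n) :
    ¬ ∃ (p q : ℕ → k) (x : k → k), ∀ b : k,
        (X ^ n + (∑ i ∈ Finset.Icc 1 (n - 1), C (b * p (i + 1) + q (i + 1)) * X ^ i)
            + C b : k[X]) =
          (X - C (x b)) ^ n := by
  rintro ⟨p, q, x, h⟩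
  have hn0 : n ≠ 0 := by omega
  have hconst (b : k) : (-x b) ^ n = b := by
    have := congrArg (coeff · 0) (h b)
    rwa [coeff_zero_X_pow_add_sum_add_C _ _ hn0, coeff_X_sub_C_pow_zero, eq_comm] at this
  have haffine (b : k) : -x b = p n / n * b + q n / n := by
    have := congrArg (coeff · (n - 1)) (h b)
    rw [coeff_pred_X_pow_add_sum_add_C _ _ hn, coeff_X_sub_C_pow_pred _ hn0,
      Nat.sub_add_cancel (by omega)] at this
    field_simp
    linear_combination this.symm
  exact not_forall_affine_pow_eq_self (by omega) (p n / n) (q n / n) fun b =>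
    haffine b ▸ hconst b
end

section
/- Let Q be a connected wild quiver containing a cycle (oriented or not) of minimal length, with vertices x_1, …, x_l, and an extra arrow β : y → z with both y, z on the cycle. For each 4-element subset M ⊆ k, define a representation S(M) of Q that is k^4 at each cycle vertex, the identity on all cycle arrows except one arrow which acts by the diagonal matrix with diagonal M, the 4-cycle permutation matrix on β, and 0 elsewhere. Then S(M) is a brick (End S(M) = k), and Hom(S(M), S(M')) = 0 whenever M and M' are disjoint. -/
/-!
All arrows of the cycle other than `a 0` act by the identity on both `S(M)` and `S(M')`, so a
morphism `φ` takes one and the same value `F` at every cycle vertex. The arrows `a 0` and `β` then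
say that `F` intertwines `diag M` with `diag M'` and commutes with the rotation matrix. The first
relation reads `F i j * M j = M' i * F i j`, so `F i j = 0` unless `M j = M' i`: this kills `F`
when `M` and `M'` are disjoint, and makes `F` diagonal when `M' = M` is injective. Commuting with
the 4-cycle permutation makes the diagonal constant, so `F` is a scalar.
-/

theorem Fin.apply_eq_apply_zero_of_apply_add_one {α : Type*} {n : ℕ} {f : Fin (n + 1) → α}
    (h : ∀ i, i ≠ 0 → f i = f (i + 1)) (i : Fin (n + 1)) : f i = f 0 := by
  induction i using Fin.reverseInduction with
  | last =>
    rcases eq_or_ne (Fin.last n) 0 with h0 | h0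
    · rw [h0]
    · rw [h _ h0, Fin.last_add_one]
  | cast i ih =>
    rcases eq_or_ne i.castSucc 0 with h0 | h0
    · rw [h0]
    · rw [h _ h0, Fin.coeSucc_eq_succ, ih]

namespace Matrix

variable {n R : Type*} [Fintype n] [DecidableEq n] [CommRing R]

theorem apply_eq_zero_of_mul_diagonal_eq_diagonal_mul [NoZeroDivisors R] {F : Matrix n n R}
    {d d' : n → R} (h : F * diagonal d = diagonal d' * F) {i j : n} (hij : d j ≠ d' i) :
    F i j = 0 := by
  have hij' : F i j * d j = d' i * F i j := by
    simpa only [mul_diagonal, diagonal_mul] using congrFun₂ h i j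
  refine (mul_eq_zero.mp ?_).resolve_right (sub_ne_zero.mpr hij)
  linear_combination hij'

theorem eq_zero_of_mul_diagonal_eq_diagonal_mul [NoZeroDivisors R] {F : Matrix n n R}
    {d d' : n → R} (h : F * diagonal d = diagonal d' * F)
    (hd : Disjoint (Set.range d) (Set.range d')) : F = 0 :=
  ext fun i j => apply_eq_zero_of_mul_diagonal_eq_diagonal_mul h (hd.ne_of_mem ⟨j, rfl⟩ ⟨i, rfl⟩)

theorem apply_perm_perm_of_mul_comm {F : Matrix n n R} {σ : Equiv.Perm n}
    (h : F * of (fun i j => if i = σ j then (1 : R) else 0)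
      = of (fun i j => if i = σ j then (1 : R) else 0) * F) (i j : n) :
    F (σ i) (σ j) = F i j := by
  simpa [mul_apply] using congrFun₂ h (σ i) j

theorem eq_smul_one_of_commute_diagonal_of_commute_finRotate [NoZeroDivisors R] {m : ℕ}
    {F : Matrix (Fin (m + 1)) (Fin (m + 1)) R} {d : Fin (m + 1) → R}
    (hd : Function.Injective d) (hD : F * diagonal d = diagonal d * F)
    (hP : F * of (fun i j => if i = finRotate (m + 1) j then (1 : R) else 0)
      = of (fun i j => if i = finRotate (m + 1) j then (1 : R) else 0) * F) :
    F = F 0 0 • 1 := by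
  have hdiag : ∀ i, F i i = F 0 0 :=
    Fin.apply_eq_apply_zero_of_apply_add_one (f := fun i => F i i) fun i _ => by
      simpa only [finRotate_apply] using (apply_perm_perm_of_mul_comm hP i i).symm
  ext i j
  rcases eq_or_ne i j with rfl | hij
  · simp [hdiag]
  · simp [one_apply_ne hij, apply_eq_zero_of_mul_diagonal_eq_diagonal_mul hD (hd.ne hij.symm)]

end Matrix

section QuiverRepresentation

variable {k V A W : Type*} [Semiring k] [AddCommMonoid W] [Module k W] {s t : A → V}
  {SubSp : V → Submodule k W} {g g' : A → W →ₗ[k] W} {φ : V → W →ₗ[k] W}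

theorem comp_eq_comp_of_source_eq_top
    (hφ : ∀ e : A, ∀ u ∈ SubSp (s e), φ (t e) (g e u) = g' e (φ (s e) u))
    {e : A} (he : SubSp (s e) = ⊤) : φ (t e) ∘ₗ g e = g' e ∘ₗ φ (s e) :=
  LinearMap.ext fun u => hφ e u (he ▸ Submodule.mem_top)

variable {l : ℕ} {x : Fin (l + 1) → V}

theorem apply_cycle_eq_apply_zero {a : Fin (l + 1) → A}
    (hcyc : ∀ i : Fin (l + 1),
        (s (a i) = x i ∧ t (a i) = x (i + 1)) ∨ (s (a i) = x (i + 1) ∧ t (a i) = x i))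
    (hon : ∀ i, SubSp (x i) = ⊤)
    (hgid : ∀ i : Fin (l + 1), i ≠ 0 → g (a i) = LinearMap.id)
    (hgid' : ∀ i : Fin (l + 1), i ≠ 0 → g' (a i) = LinearMap.id)
    (hφ : ∀ e : A, ∀ u ∈ SubSp (s e), φ (t e) (g e u) = g' e (φ (s e) u)) (i : Fin (l + 1)) :
    φ (x i) = φ (x 0) :=
  Fin.apply_eq_apply_zero_of_apply_add_one (f := fun i => φ (x i)) (fun i hi => by
    rcases hcyc i with ⟨hs, ht⟩ | ⟨hs, ht⟩
    all_goals
      have h := comp_eq_comp_of_source_eq_top hφ (hs ▸ hon _)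
      rw [hgid i hi, hgid' i hi, hs, ht, LinearMap.comp_id, LinearMap.id_comp] at h
    exacts [h.symm, h]) i

theorem apply_eq_of_apply_zero_eq (hconst : ∀ i, φ (x i) = φ (x 0))
    (hoff : ∀ v, v ∉ Set.range x → SubSp v = ⊥) {f : W →ₗ[k] W} (h0 : φ (x 0) = f)
    (v : V) (u : W) (hu : u ∈ SubSp v) : φ v u = f u := by
  by_cases hv : v ∈ Set.range x
  · obtain ⟨i, rfl⟩ := hv
    rw [hconst, h0]
  · rw [hoff v hv, Submodule.mem_bot] at hu
    simp [hu]

end QuiverRepresentation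

theorem toMatrix'_mul_eq_mul_toMatrix' {R n V A : Type*} [CommRing R] [Fintype n]
    [DecidableEq n] {s t : A → V} {SubSp : V → Submodule R (n → R)}
    {g g' : A → (n → R) →ₗ[R] (n → R)} {φ : V → (n → R) →ₗ[R] (n → R)} {l : ℕ}
    {x : Fin (l + 1) → V}
    (hconst : ∀ i, φ (x i) = φ (x 0)) (hon : ∀ i, SubSp (x i) = ⊤)
    (hφ : ∀ e : A, ∀ u ∈ SubSp (s e), φ (t e) (g e u) = g' e (φ (s e) u))
    {e : A} {i j : Fin (l + 1)} (hs : s e = x i) (ht : t e = x j)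
    {G G' : Matrix n n R} (hG : g e = Matrix.toLin' G) (hG' : g' e = Matrix.toLin' G') :
    LinearMap.toMatrix' (φ (x 0)) * G = G' * LinearMap.toMatrix' (φ (x 0)) := by
  have h := comp_eq_comp_of_source_eq_top hφ (hs ▸ hon i)
  rw [hs, ht, hconst i, hconst j, hG, hG'] at h
  simpa [LinearMap.toMatrix'_comp] using congrArg LinearMap.toMatrix' h

theorem cycle_representation_brick_and_orthogonal_general
    (k : Type) [Field k]
    (V A : Type) (s t : A → V) (l : ℕ)
    (x : Fin (l + 1) → V)
    (a : Fin (l + 1) → A)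
    -- each cycle arrow joins consecutive cycle vertices, in one of the two directions
    (hcyc : ∀ i : Fin (l + 1),
        (s (a i) = x i ∧ t (a i) = x (i + 1)) ∨ (s (a i) = x (i + 1) ∧ t (a i) = x i))
    -- the extra arrow β, distinct from the cycle arrows, with both endpoints on the cycle
    (β : A) (iy iz : Fin (l + 1)) (hsβ : s β = x iy) (htβ : t β = x iz)
    -- the two 4-element subsets of k
    (M M' : Fin 4 → k) (hM : Function.Injective M)
    -- the common vertex spaces: k⁴ on the cycle, 0 elsewhere
    (SubSp : V → Submodule k (Fin 4 → k))
    (hSubOn : ∀ v, v ∈ Set.range x → SubSp v = ⊤)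
    (hSubOff : ∀ v, v ∉ Set.range x → SubSp v = ⊥)
    -- the arrow maps of S(M) and S(M')
    (g g' : A → ((Fin 4 → k) →ₗ[k] (Fin 4 → k)))
    (hg0 : g (a 0) = Matrix.toLin' (Matrix.diagonal M))
    (hg0' : g' (a 0) = Matrix.toLin' (Matrix.diagonal M'))
    (hgid : ∀ i : Fin (l + 1), i ≠ 0 → g (a i) = LinearMap.id)
    (hgid' : ∀ i : Fin (l + 1), i ≠ 0 → g' (a i) = LinearMap.id)
    (hgβ : g β = Matrix.toLin' (Matrix.of fun i j => if i = finRotate 4 j then (1 : k) else 0)) :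
    -- (1) S(M) is a brick: every endomorphism is a scalar
    (∀ φ : V → ((Fin 4 → k) →ₗ[k] (Fin 4 → k)),
        (∀ e : A, ∀ u ∈ SubSp (s e), φ (t e) (g e u) = g e (φ (s e) u)) →
        ∃ c : k, ∀ v : V, ∀ u ∈ SubSp v, φ v u = c • u) ∧
    -- (2) Hom(S(M), S(M')) = 0 when M and M' are disjoint
    (Disjoint (Set.range M) (Set.range M') →
      ∀ φ : V → ((Fin 4 → k) →ₗ[k] (Fin 4 → k)),
        (∀ e : A, ∀ u ∈ SubSp (s e), φ (t e) (g e u) = g' e (φ (s e) u)) →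
        ∀ v : V, ∀ u ∈ SubSp v, φ v u = 0) := by
  have hon : ∀ i, SubSp (x i) = ⊤ := fun i => hSubOn _ ⟨i, rfl⟩
  obtain ⟨i₀, j₀, hs₀, ht₀⟩ : ∃ i j, s (a 0) = x i ∧ t (a 0) = x j := by
    rcases hcyc 0 with h | h <;> exact ⟨_, _, h⟩
  refine ⟨fun φ hφ => ?_, fun hdisj φ hφ => ?_⟩
  · have hconst := apply_cycle_eq_apply_zero hcyc hon hgid hgid hφ
    have hF := Matrix.eq_smul_one_of_commute_diagonal_of_commute_finRotate hM
      (toMatrix'_mul_eq_mul_toMatrix' hconst hon hφ hs₀ ht₀ hg0 hg0)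
      (toMatrix'_mul_eq_mul_toMatrix' hconst hon hφ hsβ htβ hgβ hgβ)
    have hφ0 : φ (x 0) = LinearMap.toMatrix' (φ (x 0)) 0 0 • LinearMap.id :=
      LinearMap.toMatrix'.injective (by simpa using hF)
    exact ⟨_, fun v u hu => apply_eq_of_apply_zero_eq hconst hSubOff hφ0 v u hu⟩
  · have hconst := apply_cycle_eq_apply_zero hcyc hon hgid hgid' hφ
    have hF := Matrix.eq_zero_of_mul_diagonal_eq_diagonal_mul
      (toMatrix'_mul_eq_mul_toMatrix' hconst hon hφ hs₀ ht₀ hg0 hg0') hdisj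
    have hφ0 : φ (x 0) = 0 := LinearMap.toMatrix'.injective (by simpa using hF)
    exact fun v u hu => apply_eq_of_apply_zero_eq hconst hSubOff hφ0 v u hu

/-- Let `Q = (V, A, s, t)` be a (connected wild) quiver containing a
cycle — oriented or not — of minimal length with (pairwise distinct) vertices
`x 0, …, x l` and arrows `a 0, …, a l`, together with an extra arrow `β : y → z` whose
endpoints both lie on the cycle.  For a 4-element subset `M ⊆ k` (an injective
`M : Fin 4 → k`), let `S(M)` be the representation of `Q` which is `k⁴` at each cycle
vertex and `0` elsewhere (encoded by the subspaces `SubSp v ⊆ k⁴`), is the identity on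
all cycle arrows except `a 0`, which acts by the diagonal matrix with diagonal `M`, is
the 4-cycle permutation matrix on `β`, and `0` on all other arrows.  Then `S(M)` is a
brick, and `Hom(S(M), S(M')) = 0` whenever `M` and `M'` have disjoint ranges. -/
theorem cycle_representation_brick_and_orthogonal
    (k : Type) [Field k] [IsAlgClosed k]
    (V A : Type) (s t : A → V) (l : ℕ) (hl : 1 ≤ l)
    (x : Fin (l + 1) → V) (hx : Function.Injective x)
    (a : Fin (l + 1) → A) (ha : Function.Injective a)
    -- each cycle arrow joins consecutive cycle vertices, in one of the two directions
    (hcyc : ∀ i : Fin (l + 1),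
        (s (a i) = x i ∧ t (a i) = x (i + 1)) ∨ (s (a i) = x (i + 1) ∧ t (a i) = x i))
    -- the extra arrow β, distinct from the cycle arrows, with both endpoints on the cycle
    (β : A) (hβ : ∀ i, β ≠ a i) (iy iz : Fin (l + 1)) (hsβ : s β = x iy) (htβ : t β = x iz)
    -- the two 4-element subsets of k
    (M M' : Fin 4 → k) (hM : Function.Injective M) (hM' : Function.Injective M')
    -- the common vertex spaces: k⁴ on the cycle, 0 elsewhere
    (SubSp : V → Submodule k (Fin 4 → k))
    (hSubOn : ∀ v, v ∈ Set.range x → SubSp v = ⊤)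
    (hSubOff : ∀ v, v ∉ Set.range x → SubSp v = ⊥)
    -- the arrow maps of S(M) and S(M')
    (g g' : A → ((Fin 4 → k) →ₗ[k] (Fin 4 → k)))
    (hg0 : g (a 0) = Matrix.toLin' (Matrix.diagonal M))
    (hg0' : g' (a 0) = Matrix.toLin' (Matrix.diagonal M'))
    (hgid : ∀ i : Fin (l + 1), i ≠ 0 → g (a i) = LinearMap.id)
    (hgid' : ∀ i : Fin (l + 1), i ≠ 0 → g' (a i) = LinearMap.id)
    (hgβ : g β = Matrix.toLin' (Matrix.of fun i j => if i = finRotate 4 j then (1 : k) else 0))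
    (hgβ' : g' β = Matrix.toLin' (Matrix.of fun i j => if i = finRotate 4 j then (1 : k) else 0))
    (hgout : ∀ e : A, e ∉ Set.range a → e ≠ β → g e = 0)
    (hgout' : ∀ e : A, e ∉ Set.range a → e ≠ β → g' e = 0) :
    -- (1) S(M) is a brick: every endomorphism is a scalar
    (∀ φ : V → ((Fin 4 → k) →ₗ[k] (Fin 4 → k)),
        (∀ e : A, ∀ u ∈ SubSp (s e), φ (t e) (g e u) = g e (φ (s e) u)) →
        ∃ c : k, ∀ v : V, ∀ u ∈ SubSp v, φ v u = c • u) ∧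
    -- (2) Hom(S(M), S(M')) = 0 when M and M' are disjoint
    (Disjoint (Set.range M) (Set.range M') →
      ∀ φ : V → ((Fin 4 → k) →ₗ[k] (Fin 4 → k)),
        (∀ e : A, ∀ u ∈ SubSp (s e), φ (t e) (g e u) = g' e (φ (s e) u)) →
        ∀ v : V, ∀ u ∈ SubSp v, φ v u = 0) :=
  cycle_representation_brick_and_orthogonal_general k V A s t l x a hcyc β iy iz hsβ htβ M M' hM
    SubSp hSubOn hSubOff g g' hg0 hg0' hgid hgid' hgβ
end

section
/- With the Brenner construction F : Mod A → Mod k⟨X,Y⟩ defined by FM = M^{n+2} with the shift-type actions of X and Y, every k⟨X,Y⟩-submodule U of FM equals (M')^{n+2} = FM' for the A-submodule M' = π_1(U), where π_1 is projection to the first coordinate. In particular F induces an isomorphism between the lattice of A-submodules of M and the lattice of k⟨X,Y⟩-submodules of FM, and F preserves composition length. -/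
/-!
`X` is the shift up the positions `0, …, N-1` plus strictly lower terms, `Y` the shift down plus
strictly upper terms. Hence `X^t (Pi.single 0 m)` vanishes below position `t` with entry `m` at
`t`, and `Y^t` sends a vector vanishing above `t` to `Pi.single 0` of its entry at `t`. With `T_t`
the truncation to positions `≤ t`, the coordinate projection `P_t u = Pi.single t (u t)` is
therefore `T_t X^t Y^t T_t`, while `T_t = 1 - ∑_{l > t} P_l`; so by downward induction on `t`
every `X,Y`-invariant `U` is stable under all `P_t`. Since `X^t`, `Y^t` move singles between
positions `0` and `t`, this gives `U = (π₀ U)^N`, and `x i j m`, `y i j m` are coordinates of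
`X (Pi.single j m)`, `Y (Pi.single j m)`.
-/

open Finset Module

section

variable {R M : Type*} [Semiring R] [AddCommMonoid M] [Module R M]

lemma Module.End.pow_mem_invtSubmodule {f : End R M} {p : Submodule R M}
    (hp : p ∈ f.invtSubmodule) (s : ℕ) : p ∈ (f ^ s).invtSubmodule := by
  induction s with
  | zero => simp
  | succ s ih => rw [pow_succ']; exact End.invtSubmodule.comp f hp ih

lemma Submodule.map_proj_pi_const {ι : Type*} (i : ι) (V : Submodule R M) :
    (Submodule.pi Set.univ fun _ : ι => V).map (LinearMap.proj i) = V := by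
  ext m
  exact ⟨fun ⟨u, hu, hum⟩ => hum ▸ hu i trivial,
    fun hm => ⟨fun _ => m, fun _ _ => hm, rfl⟩⟩

end

namespace Brenner

variable {k M : Type*} [Ring k] [AddCommGroup M] [Module k M] {N : ℕ}

def blockOp (a : Fin N → Fin N → M →ₗ[k] M) : End k (Fin N → M) :=
  LinearMap.pi fun i => ∑ j, a i j ∘ₗ LinearMap.proj j

@[simp]
lemma blockOp_apply (a : Fin N → Fin N → M →ₗ[k] M) (u : Fin N → M) (i : Fin N) :
    blockOp a u i = ∑ j, a i j (u j) := by
  simp [blockOp]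

lemma blockOp_single_apply (a : Fin N → Fin N → M →ₗ[k] M) (i j : Fin N) (m : M) :
    blockOp a (Pi.single j m) i = a i j m := by
  rw [blockOp_apply, Fintype.sum_eq_single j fun l hl => by simp [hl], Pi.single_eq_same]

structure IsLowerShift (a : Fin N → Fin N → M →ₗ[k] M) : Prop where
  subdiag : ∀ i j : Fin N, (i : ℕ) = j + 1 → a i j = LinearMap.id
  upper : ∀ i j : Fin N, (i : ℕ) ≤ j → a i j = 0

structure IsUpperShift (a : Fin N → Fin N → M →ₗ[k] M) : Prop where
  superdiag : ∀ i j : Fin N, (j : ℕ) = i + 1 → a i j = LinearMap.id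
  lower : ∀ i j : Fin N, (j : ℕ) ≤ i → a i j = 0

namespace IsLowerShift

variable {x : Fin N → Fin N → M →ₗ[k] M} {u : Fin N → M}

lemma blockOp_apply_eq_zero (hx : IsLowerShift x) {b : ℕ}
    (hu : ∀ l : Fin N, (l : ℕ) < b → u l = 0) {j : Fin N} (hj : (j : ℕ) ≤ b) :
    blockOp x u j = 0 := by
  refine (blockOp_apply x u j).trans (sum_eq_zero fun l _ => ?_)
  rcases le_or_gt (j : ℕ) l with hjl | hlj
  · simp [hx.upper j l hjl]
  · simp [hu l (by omega)]

lemma blockOp_apply_eq (hx : IsLowerShift x) {b : Fin N} (hu : ∀ l < b, u l = 0)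
    {j : Fin N} (hj : (j : ℕ) = b + 1) : blockOp x u j = u b := by
  rw [blockOp_apply, sum_eq_single b, hx.subdiag j b hj, LinearMap.id_apply]
  · intro l _ hlb
    rcases le_or_gt (j : ℕ) l with hjl | hlj
    · simp [hx.upper j l hjl]
    · simp [hu l (by omega)]
  · simp

lemma pow_blockOp_single_zero_apply [NeZero N] (hx : IsLowerShift x) (m : M) (s : ℕ)
    {j : Fin N} (hj : (j : ℕ) ≤ s) :
    (blockOp x ^ s) (Pi.single 0 m) j = if (j : ℕ) = s then m else 0 := by
  induction s generalizing j with
  | zero =>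
    obtain rfl : j = 0 := Fin.ext (by simp only [Fin.val_zero]; omega)
    simp
  | succ s ih =>
    have hvan : ∀ l : Fin N, (l : ℕ) < s → (blockOp x ^ s) (Pi.single 0 m) l = 0 :=
      fun l hl => by rw [ih hl.le, if_neg hl.ne]
    rw [pow_succ', Module.End.mul_apply]
    rcases Nat.lt_or_eq_of_le hj with hjs | hjs
    · rw [hx.blockOp_apply_eq_zero hvan (by omega), if_neg (by omega)]
    · rw [hx.blockOp_apply_eq (b := ⟨s, by omega⟩) (fun l hl => hvan l hl) hjs, ih le_rfl,
        if_pos rfl, if_pos hjs]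

end IsLowerShift

namespace IsUpperShift

variable {y : Fin N → Fin N → M →ₗ[k] M} {u : Fin N → M}

lemma blockOp_apply_eq_zero (hy : IsUpperShift y) {t : Fin N} (hu : ∀ l, t < l → u l = 0)
    {j : Fin N} (hj : t ≤ j) : blockOp y u j = 0 := by
  refine (blockOp_apply y u j).trans (sum_eq_zero fun l _ => ?_)
  rcases le_or_gt l j with hlj | hjl
  · simp [hy.lower j l hlj]
  · simp [hu l (hj.trans_lt hjl)]

lemma blockOp_apply_eq (hy : IsUpperShift y) {t : Fin N} (hu : ∀ l, t < l → u l = 0)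
    {j : Fin N} (hj : (t : ℕ) = j + 1) : blockOp y u j = u t := by
  rw [blockOp_apply, sum_eq_single t, hy.superdiag j t hj, LinearMap.id_apply]
  · intro l _ hlt
    rcases le_or_gt l j with hlj | hjl
    · simp [hy.lower j l hlj]
    · simp [hu l (by omega)]
  · simp

lemma pow_blockOp_eq_single_zero [NeZero N] (hy : IsUpperShift y) {t : Fin N}
    (hu : ∀ l, t < l → u l = 0) : (blockOp y ^ (t : ℕ)) u = Pi.single 0 (u t) := by
  obtain ⟨s, hs⟩ := t
  induction s generalizing u with
  | zero =>
    ext j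
    rcases eq_or_ne j 0 with rfl | hj
    · simp
    · simp [hj, hu j (Fin.pos_iff_ne_zero.2 hj)]
  | succ s ih =>
    have hvan : ∀ l, (⟨s, by omega⟩ : Fin N) < l → blockOp y u l = 0 :=
      fun l hl => hy.blockOp_apply_eq_zero hu (Fin.le_def.2 (Fin.lt_def.1 hl))
    rw [pow_succ, Module.End.mul_apply, ih (by omega) hvan, hy.blockOp_apply_eq hu rfl]

end IsUpperShift

section Submodule

variable {x y : Fin N → Fin N → M →ₗ[k] M} {U : Submodule k (Fin N → M)}

lemma pi_mem_invtSubmodule_blockOp {a : Fin N → Fin N → M →ₗ[k] M} {V : Submodule k M}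
    (hV : ∀ i j, ∀ m ∈ V, a i j m ∈ V) :
    Submodule.pi Set.univ (fun _ => V) ∈ (blockOp a).invtSubmodule := fun u hu i _ => by
  rw [blockOp_apply]
  exact V.sum_mem fun j _ => hV i j _ (hu j trivial)

lemma truncate_mem {t : Fin N} (hU : ∀ l, t < l → ∀ u ∈ U, Pi.single l (u l) ∈ U)
    {u : Fin N → M} (hu : u ∈ U) : (fun j => if j ≤ t then u j else 0) ∈ U := by
  have htrunc : (fun j => if j ≤ t then u j else 0) = u - ∑ l ∈ Ioi t, Pi.single l (u l) := by
    ext j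
    by_cases hj : j ≤ t
    · simp [hj, not_lt.2 hj, Finset.sum_apply, Pi.single_apply]
    · simp [hj, not_le.1 hj, Finset.sum_apply, Pi.single_apply]
  rw [htrunc]
  exact sub_mem hu (U.sum_mem fun l hl => hU l (mem_Ioi.1 hl) u hu)

theorem single_apply_mem [NeZero N] (hx : IsLowerShift x) (hy : IsUpperShift y)
    (hX : U ∈ (blockOp x).invtSubmodule) (hY : U ∈ (blockOp y).invtSubmodule)
    (t : Fin N) {u : Fin N → M} (hu : u ∈ U) : Pi.single t (u t) ∈ U := by
  induction t using WellFoundedGT.induction generalizing u with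
  | _ t ih =>
  have hU : ∀ l, t < l → ∀ v ∈ U, Pi.single l (v l) ∈ U := fun l hl v hv => ih l hl hv
  -- `Pi.single t (u t) = T_t (X^t (Y^t (T_t u)))`, with `T_t` the truncation at `t`
  have hYt : Pi.single 0 (u t) ∈ U := by
    have := hy.pow_blockOp_eq_single_zero (u := fun j => if j ≤ t then u j else 0) (t := t)
      fun l hl => if_neg hl.not_ge
    rw [if_pos le_rfl] at this
    exact this ▸ End.pow_mem_invtSubmodule hY t (truncate_mem hU hu)
  convert truncate_mem hU (End.pow_mem_invtSubmodule hX t hYt) using 1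
  ext j
  rcases lt_trichotomy j t with hjt | rfl | hjt
  · simp [hjt.le, hjt.ne, hx.pow_blockOp_single_zero_apply _ _ (Fin.le_def.1 hjt.le),
      Fin.val_ne_of_ne hjt.ne]
  · simp [hx.pow_blockOp_single_zero_apply _ _ le_rfl]
  · simp [hjt.not_ge, hjt.ne']

lemma apply_mem_map_proj_zero [NeZero N] (hx : IsLowerShift x) (hy : IsUpperShift y)
    (hX : U ∈ (blockOp x).invtSubmodule) (hY : U ∈ (blockOp y).invtSubmodule)
    {u : Fin N → M} (hu : u ∈ U) (i : Fin N) : u i ∈ U.map (LinearMap.proj 0) := by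
  have hYi := hy.pow_blockOp_eq_single_zero (u := Pi.single i (u i)) (t := i)
    fun l hl => Pi.single_eq_of_ne (ne_of_gt hl) _
  rw [Pi.single_eq_same] at hYi
  refine ⟨Pi.single 0 (u i), ?_, by simp⟩
  exact hYi ▸ End.pow_mem_invtSubmodule hY i (single_apply_mem hx hy hX hY i hu)

lemma single_mem_of_mem_map_proj_zero [NeZero N] (hx : IsLowerShift x) (hy : IsUpperShift y)
    (hX : U ∈ (blockOp x).invtSubmodule) (hY : U ∈ (blockOp y).invtSubmodule)
    {m : M} (hm : m ∈ U.map (LinearMap.proj 0)) (i : Fin N) : Pi.single i m ∈ U := by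
  obtain ⟨v, hv, rfl⟩ := hm
  have := single_apply_mem hx hy hX hY i
    (End.pow_mem_invtSubmodule hX i (single_apply_mem hx hy hX hY 0 hv))
  rwa [hx.pow_blockOp_single_zero_apply _ _ le_rfl, if_pos rfl] at this

theorem eq_pi_map_proj_zero [NeZero N] (hx : IsLowerShift x) (hy : IsUpperShift y)
    (hX : U ∈ (blockOp x).invtSubmodule) (hY : U ∈ (blockOp y).invtSubmodule) :
    U = Submodule.pi Set.univ fun _ => U.map (LinearMap.proj 0) := by
  refine le_antisymm (fun u hu i _ => apply_mem_map_proj_zero hx hy hX hY hu i) fun u hu => ?_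
  rw [← Finset.univ_sum_single u]
  exact U.sum_mem fun i _ => single_mem_of_mem_map_proj_zero hx hy hX hY (hu i trivial) i

lemma map_proj_zero_invariant [NeZero N] (hx : IsLowerShift x) (hy : IsUpperShift y)
    (hX : U ∈ (blockOp x).invtSubmodule) (hY : U ∈ (blockOp y).invtSubmodule)
    {a : Fin N → Fin N → M →ₗ[k] M} (hA : U ∈ (blockOp a).invtSubmodule) (i j : Fin N)
    {m : M} (hm : m ∈ U.map (LinearMap.proj 0)) : a i j m ∈ U.map (LinearMap.proj 0) := by
  rw [← blockOp_single_apply]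
  exact apply_mem_map_proj_zero hx hy hX hY
    (hA (single_mem_of_mem_map_proj_zero hx hy hX hY hm j)) i

end Submodule

end Brenner

open Brenner in
theorem brenner_submodule_lattice_general
    (k M : Type) [Field k] [AddCommGroup M] [Module k M]
    (n : ℕ)
    (x y : Fin (n + 2) → Fin (n + 2) → (M →ₗ[k] M))
    (hxsub : ∀ i j : Fin (n + 2), (i : ℕ) = (j : ℕ) + 1 → x i j = LinearMap.id)
    (hxupper : ∀ i j : Fin (n + 2), (i : ℕ) ≤ (j : ℕ) → x i j = 0)
    (hysup : ∀ i j : Fin (n + 2), (j : ℕ) = (i : ℕ) + 1 → y i j = LinearMap.id)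
    (hylower : ∀ i j : Fin (n + 2), (j : ℕ) ≤ (i : ℕ) → y i j = 0) :
    letI X : Module.End k (Fin (n + 2) → M) :=
      LinearMap.pi fun i => ∑ j : Fin (n + 2), (x i j) ∘ₗ LinearMap.proj j
    letI Y : Module.End k (Fin (n + 2) → M) :=
      LinearMap.pi fun i => ∑ j : Fin (n + 2), (y i j) ∘ₗ LinearMap.proj j
    -- every (X,Y)-invariant subspace U of M^{n+2} is (M')^{n+2} with M' = π₁ U
    -- an A-submodule of M
    (∀ U : Submodule k (Fin (n + 2) → M),
        (∀ u ∈ U, X u ∈ U) → (∀ u ∈ U, Y u ∈ U) →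
        (∀ i j : Fin (n + 2), ∀ m ∈ U.map (LinearMap.proj (0 : Fin (n + 2))),
            x i j m ∈ U.map (LinearMap.proj (0 : Fin (n + 2))) ∧
            y i j m ∈ U.map (LinearMap.proj (0 : Fin (n + 2)))) ∧
          U = Submodule.pi Set.univ
                (fun _ : Fin (n + 2) => U.map (LinearMap.proj (0 : Fin (n + 2))))) ∧
    -- the lattices of A-submodules of M and of k⟨X,Y⟩-submodules of M^{n+2} are isomorphic
    ∃ e : {N : Submodule k M // ∀ i j : Fin (n + 2), ∀ m ∈ N, x i j m ∈ N ∧ y i j m ∈ N} ≃o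
          {U : Submodule k (Fin (n + 2) → M) // (∀ u ∈ U, X u ∈ U) ∧ ∀ u ∈ U, Y u ∈ U},
      ∀ N, (e N : Submodule k (Fin (n + 2) → M))
            = Submodule.pi Set.univ (fun _ : Fin (n + 2) => (N : Submodule k M)) := by
  have hx : IsLowerShift x := ⟨hxsub, hxupper⟩
  have hy : IsUpperShift y := ⟨hysup, hylower⟩
  have hinv : ∀ U : Submodule k (Fin (n + 2) → M), U ∈ (blockOp x).invtSubmodule →
      U ∈ (blockOp y).invtSubmodule → ∀ i j, ∀ m ∈ U.map (LinearMap.proj 0),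
        x i j m ∈ U.map (LinearMap.proj 0) ∧ y i j m ∈ U.map (LinearMap.proj 0) :=
    fun U hX hY i j m hm => ⟨map_proj_zero_invariant hx hy hX hY hX i j hm,
      map_proj_zero_invariant hx hy hX hY hY i j hm⟩
  refine ⟨fun U hX hY => ⟨hinv U hX hY, eq_pi_map_proj_zero hx hy hX hY⟩, ?_⟩
  let e : {V : Submodule k M // ∀ i j, ∀ m ∈ V, x i j m ∈ V ∧ y i j m ∈ V} ≃
      {U : Submodule k (Fin (n + 2) → M) //
        U ∈ (blockOp x).invtSubmodule ∧ U ∈ (blockOp y).invtSubmodule} :=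
    { toFun V := ⟨Submodule.pi Set.univ fun _ => V.1,
        pi_mem_invtSubmodule_blockOp fun i j m hm => (V.2 i j m hm).1,
        pi_mem_invtSubmodule_blockOp fun i j m hm => (V.2 i j m hm).2⟩
      invFun U := ⟨U.1.map (LinearMap.proj 0), hinv U.1 U.2.1 U.2.2⟩
      left_inv V := Subtype.ext (Submodule.map_proj_pi_const 0 V.1)
      right_inv U := Subtype.ext (eq_pi_map_proj_zero hx hy U.2.1 U.2.2).symm }
  exact ⟨e.toOrderIso (fun V W h => Submodule.pi_mono fun _ _ => h)
    (fun U W h => Submodule.map_mono h), fun V => rfl⟩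

/-- Brenner's construction: let `A` be the free algebra on the
variables `x_{ij}, y_{ij}`, realized here as a `k`-vector space `M` with two families of
endomorphisms `x i j`, `y i j`.  On `FM = M^{n+2}` let `X` act by the strictly lower
triangular block matrix with identity blocks on the subdiagonal and the `x i j` below,
and `Y` by the transposed-shape upper triangular block matrix with the `y i j`.  Then
every `k⟨X,Y⟩`-submodule `U` of `FM` equals `(M')^{n+2}` for the `A`-submodule
`M' = π₁(U)`, and `M' ↦ (M')^{n+2}` is an isomorphism between the lattice of
`A`-submodules of `M` and the lattice of `k⟨X,Y⟩`-submodules of `FM` (in particular `F`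
preserves composition length). -/
theorem brenner_submodule_lattice
    (k M : Type) [Field k] [AddCommGroup M] [Module k M] [FiniteDimensional k M]
    (n : ℕ) (hn : 2 ≤ n)
    (x y : Fin (n + 2) → Fin (n + 2) → (M →ₗ[k] M))
    (hxsub : ∀ i j : Fin (n + 2), (i : ℕ) = (j : ℕ) + 1 → x i j = LinearMap.id)
    (hxupper : ∀ i j : Fin (n + 2), (i : ℕ) ≤ (j : ℕ) → x i j = 0)
    (hysup : ∀ i j : Fin (n + 2), (j : ℕ) = (i : ℕ) + 1 → y i j = LinearMap.id)
    (hylower : ∀ i j : Fin (n + 2), (j : ℕ) ≤ (i : ℕ) → y i j = 0) :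
    letI X : Module.End k (Fin (n + 2) → M) :=
      LinearMap.pi fun i => ∑ j : Fin (n + 2), (x i j) ∘ₗ LinearMap.proj j
    letI Y : Module.End k (Fin (n + 2) → M) :=
      LinearMap.pi fun i => ∑ j : Fin (n + 2), (y i j) ∘ₗ LinearMap.proj j
    -- every (X,Y)-invariant subspace U of M^{n+2} is (M')^{n+2} with M' = π₁ U
    -- an A-submodule of M
    (∀ U : Submodule k (Fin (n + 2) → M),
        (∀ u ∈ U, X u ∈ U) → (∀ u ∈ U, Y u ∈ U) →
        (∀ i j : Fin (n + 2), ∀ m ∈ U.map (LinearMap.proj (0 : Fin (n + 2))),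
            x i j m ∈ U.map (LinearMap.proj (0 : Fin (n + 2))) ∧
            y i j m ∈ U.map (LinearMap.proj (0 : Fin (n + 2)))) ∧
          U = Submodule.pi Set.univ
                (fun _ : Fin (n + 2) => U.map (LinearMap.proj (0 : Fin (n + 2))))) ∧
    -- the lattices of A-submodules of M and of k⟨X,Y⟩-submodules of M^{n+2} are isomorphic
    ∃ e : {N : Submodule k M // ∀ i j : Fin (n + 2), ∀ m ∈ N, x i j m ∈ N ∧ y i j m ∈ N} ≃o
          {U : Submodule k (Fin (n + 2) → M) // (∀ u ∈ U, X u ∈ U) ∧ ∀ u ∈ U, Y u ∈ U},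
      ∀ N, (e N : Submodule k (Fin (n + 2) → M))
            = Submodule.pi Set.univ (fun _ : Fin (n + 2) => (N : Submodule k M)) :=
  brenner_submodule_lattice_general k M n x y hxsub hxupper hysup hylower
end

section
/- With the Brenner construction F as above, F is fully faithful: every k⟨X,Y⟩-module homomorphism α : FM → FN is of the form Fβ (a diagonal block matrix diag(β,…,β)) for a unique A-module homomorphism β : M → N. -/
/-!
Write `X`, `Y` for the block operators on `FM = M^{n+2}`. Since `X` is strictly lower triangular
with identities on the subdiagonal, `ker X^p` consists of the vectors vanishing in all but the
last `p` coordinates; dually `ker Y^p` consists of those vanishing from coordinate `p` on.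
A map `α` commuting with `X` and `Y` preserves these kernels, so it sends a vector concentrated
in coordinate `j` to one concentrated in coordinate `j`: `α` is block diagonal,
`α = diag(β₀, …, β_{n+1})`. Commuting with `X` and `Y` then reads `βᵢ xᵢⱼ = xᵢⱼ βⱼ` and
`βᵢ yᵢⱼ = yᵢⱼ βⱼ`, and the identities on the subdiagonal of `x` force all `βᵢ` to be equal.
-/

section BlockEnd

variable {k P Q : Type*} [Semiring k] [AddCommMonoid P] [Module k P]
  [AddCommMonoid Q] [Module k Q] {ι : Type*} [Fintype ι]

def blockEnd (a : ι → ι → (P →ₗ[k] P)) : (ι → P) →ₗ[k] (ι → P) :=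
  LinearMap.pi fun i => ∑ j, a i j ∘ₗ LinearMap.proj j

lemma blockEnd_apply (a : ι → ι → (P →ₗ[k] P)) (w : ι → P) (i : ι) :
    blockEnd a w i = ∑ j, a i j (w j) := by
  simp [blockEnd]

lemma blockEnd_single [DecidableEq ι] (a : ι → ι → (P →ₗ[k] P)) (j : ι) (v : P) (i : ι) :
    blockEnd a (Pi.single j v) i = a i j v := by
  rw [blockEnd_apply, Finset.sum_eq_single j (fun l _ hl => by simp [hl]) (by simp)]
  simp

def diagBlock [DecidableEq ι] (α : (ι → P) →ₗ[k] (ι → Q)) (i : ι) : P →ₗ[k] Q :=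
  LinearMap.proj i ∘ₗ α ∘ₗ LinearMap.single k (fun _ => P) i

lemma apply_eq_diagBlock_of_single_apply_eq_zero [DecidableEq ι]
    {α : (ι → P) →ₗ[k] (ι → Q)} (h : ∀ j v i, i ≠ j → α (Pi.single j v) i = 0)
    (w : ι → P) (i : ι) :
    α w i = diagBlock α i (w i) := by
  conv_lhs => rw [← Finset.univ_sum_single w]
  rw [map_sum, Finset.sum_apply,
    Finset.sum_eq_single i (fun j _ hj => h j _ i (Ne.symm hj)) (by simp)]
  rfl

lemma diagBlock_comp_eq_comp_diagBlock [DecidableEq ι] {α : (ι → P) →ₗ[k] (ι → Q)}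
    {a : ι → ι → (P →ₗ[k] P)} {b : ι → ι → (Q →ₗ[k] Q)}
    (hdiag : ∀ w i, α w i = diagBlock α i (w i)) (hα : blockEnd b ∘ₗ α = α ∘ₗ blockEnd a)
    (i j : ι) :
    diagBlock α i ∘ₗ a i j = b i j ∘ₗ diagBlock α j := by
  ext v
  have hsingle : α (Pi.single j v) = Pi.single j (diagBlock α j v) :=
    funext fun l => (hdiag _ l).trans (Pi.apply_single (fun l => diagBlock α l) (by simp) j v l)
  have := congrArg (· i) (LinearMap.congr_fun hα (Pi.single j v))
  simp only [LinearMap.comp_apply, hsingle, blockEnd_single, hdiag] at this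
  exact this.symm

variable {m : ℕ}

structure IsLowerShift (x : Fin m → Fin m → (P →ₗ[k] P)) : Prop where
  subdiag : ∀ i j : Fin m, (i : ℕ) = j + 1 → x i j = LinearMap.id
  upper : ∀ i j : Fin m, (i : ℕ) ≤ j → x i j = 0

structure IsUpperShift (y : Fin m → Fin m → (P →ₗ[k] P)) : Prop where
  superdiag : ∀ i j : Fin m, (j : ℕ) = i + 1 → y i j = LinearMap.id
  lower : ∀ i j : Fin m, (j : ℕ) ≤ i → y i j = 0

namespace IsLowerShift

variable {x : Fin m → Fin m → (P →ₗ[k] P)} (hx : IsLowerShift x)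
include hx

lemma blockEnd_apply_eq_zero {w : Fin m → P} {i : Fin m}
    (hw : ∀ j : Fin m, j < i → w j = 0) :
    blockEnd x w i = 0 := by
  rw [blockEnd_apply]
  refine Finset.sum_eq_zero fun j _ => ?_
  rcases lt_or_ge j i with hji | hij
  · simp [hw j hji]
  · simp [hx.upper i j hij]

lemma blockEnd_apply_succ {w : Fin m → P} {i : Fin m} (hi : (i : ℕ) + 1 < m)
    (hw : ∀ j : Fin m, j < i → w j = 0) :
    blockEnd x w ⟨i + 1, hi⟩ = w i := by
  rw [blockEnd_apply, Finset.sum_eq_single i _ (by simp), hx.subdiag _ _ rfl,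
    LinearMap.id_apply]
  intro j _ hji
  rcases lt_or_gt_of_ne hji with hji | hij
  · simp [hw j hji]
  · rw [hx.upper _ _ (Nat.succ_le_of_lt hij), LinearMap.zero_apply]

lemma pow_blockEnd_apply_eq_zero_iff (p : ℕ) (w : Fin m → P) :
    (blockEnd x ^ p) w = 0 ↔ ∀ i : Fin m, (i : ℕ) + p < m → w i = 0 := by
  induction p generalizing w with
  | zero => simp [funext_iff]
  | succ p ih =>
    rw [pow_succ, Module.End.mul_apply, ih]
    constructor
    · intro h i hi
      induction i using WellFoundedLT.induction with
      | _ i ihi =>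
      rw [← hx.blockEnd_apply_succ (by omega)
        fun j hj => ihi j hj (by simp only [Fin.lt_def] at hj; omega)]
      exact h _ (by simp only; omega)
    · intro h i hi
      exact hx.blockEnd_apply_eq_zero fun j hj => h j (by simp only [Fin.lt_def] at hj; omega)

end IsLowerShift

lemma blockEnd_rev (a : Fin m → Fin m → (P →ₗ[k] P)) (w : Fin m → P) :
    blockEnd (fun i j => a i.rev j.rev) (w ∘ Fin.rev) = blockEnd a w ∘ Fin.rev := by
  ext i
  simp only [blockEnd_apply, Function.comp_apply]
  exact Fintype.sum_equiv Fin.revPerm _ _ fun j => rfl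

lemma pow_blockEnd_rev (a : Fin m → Fin m → (P →ₗ[k] P)) (p : ℕ) (w : Fin m → P) :
    (blockEnd (fun i j => a i.rev j.rev) ^ p) (w ∘ Fin.rev) = (blockEnd a ^ p) w ∘ Fin.rev := by
  induction p with
  | zero => rfl
  | succ p ih =>
    rw [pow_succ', Module.End.mul_apply, ih, blockEnd_rev, ← Module.End.mul_apply, ← pow_succ']

namespace IsUpperShift

variable {y : Fin m → Fin m → (P →ₗ[k] P)} (hy : IsUpperShift y)
include hy

lemma rev : IsLowerShift fun i j => y i.rev j.rev where
  subdiag i j h := hy.superdiag _ _ (by simp only [Fin.val_rev]; omega)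
  upper i j h := hy.lower _ _ (by simp only [Fin.val_rev]; omega)

lemma pow_blockEnd_apply_eq_zero_iff (p : ℕ) (w : Fin m → P) :
    (blockEnd y ^ p) w = 0 ↔ ∀ i : Fin m, p ≤ (i : ℕ) → w i = 0 := by
  have hrev : ∀ f : Fin m → P, f = 0 ↔ f ∘ Fin.rev = 0 := fun f =>
    ⟨fun h => by rw [h]; rfl, fun h => funext fun i => by simpa using congrFun h i.rev⟩
  rw [hrev, ← pow_blockEnd_rev, hy.rev.pow_blockEnd_apply_eq_zero_iff, Fin.rev_surjective.forall]
  simp only [Function.comp_apply, Fin.rev_rev, Fin.val_rev]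
  exact forall_congr' fun i => imp_congr_left (by omega)

end IsUpperShift

section Intertwiner

variable {x y : Fin m → Fin m → (P →ₗ[k] P)} {x' y' : Fin m → Fin m → (Q →ₗ[k] Q)}
  {α : (Fin m → P) →ₗ[k] (Fin m → Q)}

lemma pow_blockEnd_apply_map {a : Fin m → Fin m → (P →ₗ[k] P)}
    {b : Fin m → Fin m → (Q →ₗ[k] Q)} (hα : blockEnd b ∘ₗ α = α ∘ₗ blockEnd a) (p : ℕ)
    (w : Fin m → P) :
    (blockEnd b ^ p) (α w) = α ((blockEnd a ^ p) w) :=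
  LinearMap.congr_fun (Module.End.commute_pow_left_of_commute hα p) w

lemma IsLowerShift.map_apply_eq_zero_of_lt (hx : IsLowerShift x) (hx' : IsLowerShift x')
    (hα : blockEnd x' ∘ₗ α = α ∘ₗ blockEnd x) {s : ℕ} {w : Fin m → P}
    (hw : ∀ i : Fin m, (i : ℕ) < s → w i = 0) (i : Fin m) (hi : (i : ℕ) < s) :
    α w i = 0 := by
  have hXw : (blockEnd x ^ (m - s)) w = 0 :=
    (hx.pow_blockEnd_apply_eq_zero_iff _ w).2 fun j hj => hw j (by omega)
  have hXαw := pow_blockEnd_apply_map hα (m - s) w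
  rw [hXw, map_zero, hx'.pow_blockEnd_apply_eq_zero_iff] at hXαw
  exact hXαw i (by omega)

lemma IsUpperShift.map_apply_eq_zero_of_le (hy : IsUpperShift y) (hy' : IsUpperShift y')
    (hα : blockEnd y' ∘ₗ α = α ∘ₗ blockEnd y) {s : ℕ} {w : Fin m → P}
    (hw : ∀ i : Fin m, s ≤ (i : ℕ) → w i = 0) (i : Fin m) (hi : s ≤ (i : ℕ)) :
    α w i = 0 := by
  have hYαw := pow_blockEnd_apply_map hα s w
  rw [(hy.pow_blockEnd_apply_eq_zero_iff s w).2 hw, map_zero,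
    hy'.pow_blockEnd_apply_eq_zero_iff] at hYαw
  exact hYαw i hi

lemma map_single_apply_eq_zero_of_ne (hx : IsLowerShift x) (hx' : IsLowerShift x')
    (hy : IsUpperShift y) (hy' : IsUpperShift y') (hαx : blockEnd x' ∘ₗ α = α ∘ₗ blockEnd x)
    (hαy : blockEnd y' ∘ₗ α = α ∘ₗ blockEnd y) (j : Fin m) (v : P) (i : Fin m) (hij : i ≠ j) :
    α (Pi.single j v) i = 0 := by
  have hsingle : ∀ l : Fin m, (l : ℕ) ≠ j → Pi.single (M := fun _ => P) j v l = 0 :=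
    fun l hl => Pi.single_eq_of_ne (Fin.val_ne_iff.1 hl) _
  rcases lt_or_gt_of_ne (Fin.val_ne_iff.2 hij) with hlt | hgt
  · exact hx.map_apply_eq_zero_of_lt hx' hαx (fun l hl => hsingle l hl.ne) i hlt
  · exact hy.map_apply_eq_zero_of_le hy' hαy (fun l hl => hsingle l (by omega)) i hgt

end Intertwiner

lemma IsLowerShift.diagBlock_eq_diagBlock_zero {x : Fin (m + 1) → Fin (m + 1) → (P →ₗ[k] P)}
    {x' : Fin (m + 1) → Fin (m + 1) → (Q →ₗ[k] Q)} (hx : IsLowerShift x)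
    (hx' : IsLowerShift x') {α : (Fin (m + 1) → P) →ₗ[k] (Fin (m + 1) → Q)}
    (hdiag : ∀ w i, α w i = diagBlock α i (w i)) (hα : blockEnd x' ∘ₗ α = α ∘ₗ blockEnd x)
    (i : Fin (m + 1)) :
    diagBlock α i = diagBlock α 0 := by
  induction i using Fin.induction with
  | zero => rfl
  | succ i ih =>
    have h := diagBlock_comp_eq_comp_diagBlock hdiag hα i.succ i.castSucc
    rwa [hx.subdiag _ _ rfl, hx'.subdiag _ _ rfl, LinearMap.comp_id, LinearMap.id_comp, ih] at h

end BlockEnd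

theorem brenner_fully_faithful_general
    (k M N : Type) [Field k] [AddCommGroup M] [Module k M]
    [AddCommGroup N] [Module k N]
    (n : ℕ)
    (xM yM : Fin (n + 2) → Fin (n + 2) → (M →ₗ[k] M))
    (xN yN : Fin (n + 2) → Fin (n + 2) → (N →ₗ[k] N))
    (hxMsub : ∀ i j : Fin (n + 2), (i : ℕ) = (j : ℕ) + 1 → xM i j = LinearMap.id)
    (hxMup : ∀ i j : Fin (n + 2), (i : ℕ) ≤ (j : ℕ) → xM i j = 0)
    (hyMsup : ∀ i j : Fin (n + 2), (j : ℕ) = (i : ℕ) + 1 → yM i j = LinearMap.id)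
    (hyMlow : ∀ i j : Fin (n + 2), (j : ℕ) ≤ (i : ℕ) → yM i j = 0)
    (hxNsub : ∀ i j : Fin (n + 2), (i : ℕ) = (j : ℕ) + 1 → xN i j = LinearMap.id)
    (hxNup : ∀ i j : Fin (n + 2), (i : ℕ) ≤ (j : ℕ) → xN i j = 0)
    (hyNsup : ∀ i j : Fin (n + 2), (j : ℕ) = (i : ℕ) + 1 → yN i j = LinearMap.id)
    (hyNlow : ∀ i j : Fin (n + 2), (j : ℕ) ≤ (i : ℕ) → yN i j = 0)
    (α : (Fin (n + 2) → M) →ₗ[k] (Fin (n + 2) → N))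
    (hαX : ∀ v,
        α ((LinearMap.pi fun i => ∑ j : Fin (n + 2), (xM i j) ∘ₗ LinearMap.proj j) v)
          = (LinearMap.pi fun i => ∑ j : Fin (n + 2), (xN i j) ∘ₗ LinearMap.proj j) (α v))
    (hαY : ∀ v,
        α ((LinearMap.pi fun i => ∑ j : Fin (n + 2), (yM i j) ∘ₗ LinearMap.proj j) v)
          = (LinearMap.pi fun i => ∑ j : Fin (n + 2), (yN i j) ∘ₗ LinearMap.proj j) (α v)) :
    ∃! β : M →ₗ[k] N,
      (∀ i j : Fin (n + 2),
          β ∘ₗ xM i j = xN i j ∘ₗ β ∧ β ∘ₗ yM i j = yN i j ∘ₗ β) ∧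
      ∀ (v : Fin (n + 2) → M) (i : Fin (n + 2)), α v i = β (v i) := by
  have hxM : IsLowerShift xM := ⟨hxMsub, hxMup⟩
  have hxN : IsLowerShift xN := ⟨hxNsub, hxNup⟩
  have hyM : IsUpperShift yM := ⟨hyMsup, hyMlow⟩
  have hyN : IsUpperShift yN := ⟨hyNsup, hyNlow⟩
  have hαx : blockEnd xN ∘ₗ α = α ∘ₗ blockEnd xM := LinearMap.ext fun v => (hαX v).symm
  have hαy : blockEnd yN ∘ₗ α = α ∘ₗ blockEnd yM := LinearMap.ext fun v => (hαY v).symm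
  have hdiag := apply_eq_diagBlock_of_single_apply_eq_zero
    (map_single_apply_eq_zero_of_ne hxM hxN hyM hyN hαx hαy)
  have hconst := hxM.diagBlock_eq_diagBlock_zero hxN hdiag hαx
  refine ⟨diagBlock α 0, ⟨fun i j => ?_, fun v i => by rw [hdiag, hconst]⟩, fun β hβ => ?_⟩
  · have hx := diagBlock_comp_eq_comp_diagBlock hdiag hαx i j
    have hy := diagBlock_comp_eq_comp_diagBlock hdiag hαy i j
    rw [hconst i, hconst j] at hx hy
    exact ⟨hx, hy⟩
  · ext v
    rw [← hβ.2 (fun _ => v) 0, hdiag]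

/-- Brenner's construction is fully faithful: with `FM = M^{n+2}` and
`FN = N^{n+2}` carrying the shift-type `X`- and `Y`-actions built from the structure
endomorphisms `xM i j, yM i j` of `M` and `xN i j, yN i j` of `N`, every `k⟨X,Y⟩`-module
homomorphism `α : FM → FN` (i.e. `k`-linear map commuting with the `X`- and `Y`-actions)
is the diagonal block matrix `diag(β, …, β)` of a unique `A`-module homomorphism
`β : M → N` (i.e. a `k`-linear map commuting with all the structure endomorphisms). -/
theorem brenner_fully_faithful
    (k M N : Type) [Field k] [AddCommGroup M] [Module k M] [FiniteDimensional k M]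
    [AddCommGroup N] [Module k N] [FiniteDimensional k N]
    (n : ℕ) (hn : 2 ≤ n)
    (xM yM : Fin (n + 2) → Fin (n + 2) → (M →ₗ[k] M))
    (xN yN : Fin (n + 2) → Fin (n + 2) → (N →ₗ[k] N))
    (hxMsub : ∀ i j : Fin (n + 2), (i : ℕ) = (j : ℕ) + 1 → xM i j = LinearMap.id)
    (hxMup : ∀ i j : Fin (n + 2), (i : ℕ) ≤ (j : ℕ) → xM i j = 0)
    (hyMsup : ∀ i j : Fin (n + 2), (j : ℕ) = (i : ℕ) + 1 → yM i j = LinearMap.id)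
    (hyMlow : ∀ i j : Fin (n + 2), (j : ℕ) ≤ (i : ℕ) → yM i j = 0)
    (hxNsub : ∀ i j : Fin (n + 2), (i : ℕ) = (j : ℕ) + 1 → xN i j = LinearMap.id)
    (hxNup : ∀ i j : Fin (n + 2), (i : ℕ) ≤ (j : ℕ) → xN i j = 0)
    (hyNsup : ∀ i j : Fin (n + 2), (j : ℕ) = (i : ℕ) + 1 → yN i j = LinearMap.id)
    (hyNlow : ∀ i j : Fin (n + 2), (j : ℕ) ≤ (i : ℕ) → yN i j = 0)
    (α : (Fin (n + 2) → M) →ₗ[k] (Fin (n + 2) → N))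
    (hαX : ∀ v,
        α ((LinearMap.pi fun i => ∑ j : Fin (n + 2), (xM i j) ∘ₗ LinearMap.proj j) v)
          = (LinearMap.pi fun i => ∑ j : Fin (n + 2), (xN i j) ∘ₗ LinearMap.proj j) (α v))
    (hαY : ∀ v,
        α ((LinearMap.pi fun i => ∑ j : Fin (n + 2), (yM i j) ∘ₗ LinearMap.proj j) v)
          = (LinearMap.pi fun i => ∑ j : Fin (n + 2), (yN i j) ∘ₗ LinearMap.proj j) (α v)) :
    ∃! β : M →ₗ[k] N,
      (∀ i j : Fin (n + 2),
          β ∘ₗ xM i j = xN i j ∘ₗ β ∧ β ∘ₗ yM i j = yN i j ∘ₗ β) ∧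
      ∀ (v : Fin (n + 2) → M) (i : Fin (n + 2)), α v i = β (v i) :=
  brenner_fully_faithful_general k M N n xM yM xN yN hxMsub hxMup hyMsup hyMlow hxNsub hxNup hyNsup
    hyNlow α hαX hαY
end

section
/- For the local algebra B = k[X,Y]/(X,Y)^2, the functor H : rep K_2 → Mod B defined by H(V, W, α, β) = V ⊕ W, with X acting by (v,w) ↦ (0, α(v)) and Y acting by (v,w) ↦ (0, β(v)), is exact and satisfies G H U ≅ U for every representation U of K_2 that has no direct summand isomorphic to the simple injective (0, k, 0, 0), where G : Mod B → rep K_2 is defined by GM = (M/rad M, rad M, x̄, ȳ) with x̄, ȳ induced by multiplication by X and Y. -/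
theorem aux_compl_kronecker (k : Type) [Field k] (W : Type) [AddCommGroup W] [Module k W]
    [FiniteDimensional k W] (S : Submodule k W) (h : S ≠ ⊤) :
    ∃ W₂ : Submodule k W, Module.finrank k W₂ = 1 ∧
      ∃ W₁ : Submodule k W, IsCompl W₁ W₂ ∧ S ≤ W₁ := by
  obtain ⟨T, hT⟩ := S.exists_isCompl
  have hTne : T ≠ ⊥ := by
    intro hb
    exact h (by simpa [hb] using hT.sup_eq_top)
  obtain ⟨t, htT, ht0⟩ := Submodule.exists_mem_ne_zero_of_ne_bot hTne
  set W₂ : Submodule k W := Submodule.span k {t} with hW₂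
  have hW₂T : W₂ ≤ T := by
    rw [hW₂, Submodule.span_le, Set.singleton_subset_iff]; exact htT
  obtain ⟨T₂, hT₂⟩ := W₂.exists_isCompl
  refine ⟨W₂, finrank_span_singleton ht0, S ⊔ (T ⊓ T₂), ⟨?_, ?_⟩, le_sup_left⟩
  · rw [Submodule.disjoint_def]
    intro w hw hwW₂
    obtain ⟨s, hs, u, hu, rfl⟩ := Submodule.mem_sup.mp hw
    have hsT : s ∈ T := by
      have : s = (s + u) - u := by abel
      rw [this]
      exact T.sub_mem (hW₂T hwW₂) hu.1
    have hs0 : s = 0 := (Submodule.disjoint_def.mp hT.disjoint) s hs hsT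
    have hu0 : u = 0 := by
      have huW₂ : u ∈ W₂ := by
        have : u = (s + u) - s := by abel
        rw [this]; exact W₂.sub_mem hwW₂ (by rw [hs0]; exact W₂.zero_mem)
      exact (Submodule.disjoint_def.mp hT₂.disjoint.symm) u hu.2 huW₂
    rw [hs0, hu0, add_zero]
  · rw [codisjoint_iff]
    have hmod : (W₂ ⊔ T₂) ⊓ T = W₂ ⊔ (T₂ ⊓ T) := sup_inf_assoc_of_le T₂ hW₂T
    rw [hT₂.sup_eq_top, top_inf_eq] at hmod
    calc S ⊔ (T ⊓ T₂) ⊔ W₂ = S ⊔ ((T ⊓ T₂) ⊔ W₂) := by rw [sup_assoc]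
      _ = S ⊔ T := by rw [inf_comm, sup_comm (T₂ ⊓ T), ← hmod]
      _ = ⊤ := hT.sup_eq_top

/-- Modules over `B = k[X,Y]/(X,Y)²` are `k`-vector spaces `M` with two
endomorphisms `x, y` satisfying `x² = y² = xy = yx = 0`.  The functor
`H : rep K₂ → Mod B`, `H(V, W, α, β) = V ⊕ W` with `X` acting by `(v,w) ↦ (0, α v)` and
`Y` by `(v,w) ↦ (0, β v)`, is exact, and `G H U ≅ U` for every representation
`U = (V, W, α, β)` of the Kronecker quiver `K₂` having no direct summand isomorphic to
the simple injective `(0, k, 0, 0)`, where `G M = (M/rad M, rad M, x̄, ȳ)` and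
`rad M = xM + yM`. -/
theorem kronecker_H_exact_and_GH_iso
    (k : Type) [Field k]
    -- exactness of H: it sends exact pairs of K₂-morphisms to exact pairs
    : (∀ (V₁ W₁ V₂ W₂ V₃ W₃ : Type)
        [AddCommGroup V₁] [Module k V₁] [AddCommGroup W₁] [Module k W₁]
        [AddCommGroup V₂] [Module k V₂] [AddCommGroup W₂] [Module k W₂]
        [AddCommGroup V₃] [Module k V₃] [AddCommGroup W₃] [Module k W₃]
        (α₁ β₁ : V₁ →ₗ[k] W₁) (α₂ β₂ : V₂ →ₗ[k] W₂) (α₃ β₃ : V₃ →ₗ[k] W₃)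
        (fV : V₁ →ₗ[k] V₂) (fW : W₁ →ₗ[k] W₂) (gV : V₂ →ₗ[k] V₃) (gW : W₂ →ₗ[k] W₃),
        -- f and g are morphisms of representations of K₂
        fW ∘ₗ α₁ = α₂ ∘ₗ fV → fW ∘ₗ β₁ = β₂ ∘ₗ fV →
        gW ∘ₗ α₂ = α₃ ∘ₗ gV → gW ∘ₗ β₂ = β₃ ∘ₗ gV →
        Function.Exact fV gV → Function.Exact fW gW →
        Function.Exact (Prod.map fV fW) (Prod.map gV gW)) ∧
      -- G H U ≅ U when U has no direct summand isomorphic to (0, k, 0, 0)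
      ∀ (V W : Type) [AddCommGroup V] [Module k V] [FiniteDimensional k V]
        [AddCommGroup W] [Module k W] [FiniteDimensional k W]
        (α β : V →ₗ[k] W),
        (¬ ∃ W₂ : Submodule k W, Module.finrank k W₂ = 1 ∧
            ∃ W₁ : Submodule k W, IsCompl W₁ W₂ ∧
              LinearMap.range α ⊔ LinearMap.range β ≤ W₁) →
        -- the B-module H(V,W,α,β): x, y act on V × W, R is its radical
        letI x : (V × W) →ₗ[k] (V × W) :=
          (LinearMap.inr k V W) ∘ₗ α ∘ₗ (LinearMap.fst k V W)
        letI y : (V × W) →ₗ[k] (V × W) :=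
          (LinearMap.inr k V W) ∘ₗ β ∘ₗ (LinearMap.fst k V W)
        letI R : Submodule k (V × W) := LinearMap.range x ⊔ LinearMap.range y
        -- G H U ≅ U: an isomorphism of representations of K₂
        ∃ (e₁ : ((V × W) ⧸ R) ≃ₗ[k] V) (e₂ : R ≃ₗ[k] W),
          ∀ p : V × W,
            e₂ ⟨x p, Submodule.mem_sup_left (LinearMap.mem_range_self x p)⟩
              = α (e₁ (Submodule.Quotient.mk p)) ∧
            e₂ ⟨y p, Submodule.mem_sup_right (LinearMap.mem_range_self y p)⟩
              = β (e₁ (Submodule.Quotient.mk p)) := by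
  constructor
  · intro V₁ W₁ V₂ W₂ V₃ W₃ _ _ _ _ _ _ _ _ _ _ _ _ α₁ β₁ α₂ β₂ α₃ β₃ fV fW gV gW
      _ _ _ _ hV hW
    intro p
    constructor
    · intro hp
      obtain ⟨a, ha⟩ := (hV p.1).mp (congrArg Prod.fst hp)
      obtain ⟨b, hb⟩ := (hW p.2).mp (congrArg Prod.snd hp)
      exact ⟨(a, b), Prod.ext_iff.mpr ⟨ha, hb⟩⟩
    · rintro ⟨⟨a, b⟩, rfl⟩
      exact Prod.ext_iff.mpr ⟨(hV (fV a)).mpr ⟨a, rfl⟩, (hW (fW b)).mpr ⟨b, rfl⟩⟩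
  intro V W _ _ _ _ _ _ α β hno
  set x : (V × W) →ₗ[k] (V × W) := (LinearMap.inr k V W) ∘ₗ α ∘ₗ (LinearMap.fst k V W) with hxd
  set y : (V × W) →ₗ[k] (V × W) := (LinearMap.inr k V W) ∘ₗ β ∘ₗ (LinearMap.fst k V W) with hyd
  set R : Submodule k (V × W) := LinearMap.range x ⊔ LinearMap.range y with hRd
  have hS : LinearMap.range α ⊔ LinearMap.range β = ⊤ := by
    by_contra hne
    exact hno (by
      obtain ⟨W₂, h1, W₁, h2, h3⟩ := aux_compl_kronecker k W _ hne
      exact ⟨W₂, h1, W₁, h2, h3⟩)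
  have hR : R = LinearMap.range (LinearMap.inr k V W) := by
    have hx : LinearMap.range x = Submodule.map (LinearMap.inr k V W) (LinearMap.range α) := by
      rw [hxd, LinearMap.range_comp, LinearMap.range_comp, Submodule.range_fst,
        Submodule.map_top]
    have hy : LinearMap.range y = Submodule.map (LinearMap.inr k V W) (LinearMap.range β) := by
      rw [hyd, LinearMap.range_comp, LinearMap.range_comp, Submodule.range_fst,
        Submodule.map_top]
    rw [hRd, hx, hy, ← Submodule.map_sup, hS, Submodule.map_top]
  have hRker : R = LinearMap.ker (LinearMap.fst k V W) := by
    rw [hR, LinearMap.ker_fst]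
  have hle : R ≤ LinearMap.ker (LinearMap.fst k V W) := hRker.le
  refine ⟨LinearEquiv.ofLinear (Submodule.liftQ R (LinearMap.fst k V W) hle)
      ((Submodule.mkQ R) ∘ₗ LinearMap.inl k V W) ?_ ?_,
    LinearEquiv.ofLinear ((LinearMap.snd k V W) ∘ₗ R.subtype)
      (LinearMap.codRestrict R (LinearMap.inr k V W)
        (fun w => hR ▸ LinearMap.mem_range_self _ w)) ?_ ?_, ?_⟩
  · ext v; simp
  · refine Submodule.linearMap_qext _ (LinearMap.ext fun q => ?_)
    simp only [LinearMap.comp_apply, LinearMap.id_apply, Submodule.mkQ_apply,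
      Submodule.liftQ_apply, LinearMap.fst_apply, LinearMap.inl_apply]
    rw [Submodule.Quotient.eq, hRker]
    simp
  · ext w; simp
  · apply LinearMap.ext
    rintro ⟨⟨v, w⟩, hm⟩
    have hm' : (v, w) ∈ LinearMap.range (LinearMap.inr k V W) := by
      rw [← hR]; exact hm
    obtain ⟨w', hw'⟩ := hm'
    have hv : v = 0 := by
      have := congrArg Prod.fst hw'
      simpa using this.symm
    apply Subtype.ext
    simp only [LinearMap.comp_apply, LinearMap.codRestrict_apply, LinearMap.id_apply,
      R.coe_subtype, LinearMap.snd_apply, LinearMap.inr_apply]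
    exact Prod.ext hv.symm rfl
  · intro p
    refine ⟨?_, ?_⟩ <;>
    · simp only [LinearEquiv.ofLinear_apply, Submodule.liftQ_apply, LinearMap.comp_apply,
        R.coe_subtype, LinearMap.snd_apply, LinearMap.fst_apply, LinearMap.inr_apply]
      rfl
end
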